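/- arXiv:2511.05217 — 2 statements merged into one kernel-verified Lean document; each statement's English description precedes it below -/
import Mathlib

section
/- Let E be a real separable Banach space, p ≥ 1 and γ ∈ (0,1]. Let ν₁, ν₂ be Borel probability measures on E with ∫ ‖u‖^p dν₁(u) < ∞ and ∫ ‖u‖^p dν₂(u) < ∞, and let π be any coupling of ν₁ and ν₂ (a probability measure on E × E with marginals ν₁ and ν₂). Then for every f ∈ C_{p,γ}, |∫ f dν₁ − ∫ f dν₂| ≤ ‖f‖_{p,γ} · (1 + ∫‖u‖^p dν₁(u) + ∫‖u‖^p dν₂(u))^{1/2} · (∫_{E×E} (1 ∧ ‖u₁−u₂‖²) dπ(u₁,u₂))^{γ/2}. -/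
/-!
Integrate the increment bound `|f u₁ - f u₂| ≤ ‖f‖_{p,γ} d_{p,γ}(u₁,u₂)` against the coupling `π`.
Since `1 ∧ ‖u₁-u₂‖^γ = (1 ∧ ‖u₁-u₂‖²)^{γ/2}`, Cauchy–Schwarz bounds `∫ d_{p,γ} dπ` by
`(∫ (1 ∧ ‖u₁-u₂‖²)^γ dπ)^{1/2} (1 + ∫ ‖u₁‖^p dπ + ∫ ‖u₂‖^p dπ)^{1/2}`, and Jensen's inequality for
the concave `x ↦ x^γ` moves the power `γ` outside the first integral.
-/

open MeasureTheory Filter Topology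

noncomputable section

/-- The quasi-metric `d_{p,γ}(u₁,u₂) = (1 ∧ ‖u₁−u₂‖^γ)(1+‖u₁‖^p+‖u₂‖^p)^{1/2}`. -/
def dpg {E : Type*} [NormedAddCommGroup E] (p γ : ℝ) (u v : E) : ℝ :=
  min 1 (‖u - v‖ ^ γ) * Real.sqrt (1 + ‖u‖ ^ p + ‖v‖ ^ p)

/-- Membership in the class `C_{p,γ}`: `f` is measurable and the two suprema defining
`‖f‖_{p,γ}` are finite. -/
def MemC {E : Type*} [NormedAddCommGroup E] [MeasurableSpace E] (p γ : ℝ) (f : E → ℝ) : Prop :=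
  Measurable f ∧
  BddAbove (Set.range fun u : E => |f u| / (1 + ‖u‖ ^ (p / 2))) ∧
  BddAbove {a : ℝ | ∃ u v : E, u ≠ v ∧ a = |f u - f v| / dpg p γ u v}

/-- The norm `‖f‖_{p,γ}` of the class `C_{p,γ}`. -/
def CNorm {E : Type*} [NormedAddCommGroup E] (p γ : ℝ) (f : E → ℝ) : ℝ :=
  sSup (Set.range fun u : E => |f u| / (1 + ‖u‖ ^ (p / 2))) +
  sSup {a : ℝ | ∃ u v : E, u ≠ v ∧ a = |f u - f v| / dpg p γ u v}

lemma Real.rpow_le_one_add {x γ : ℝ} (hx : 0 ≤ x) (hγ₀ : 0 ≤ γ) (hγ₁ : γ ≤ 1) :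
    x ^ γ ≤ 1 + x := by
  rcases le_total x 1 with h | h
  · linarith [Real.rpow_le_one hx h hγ₀]
  · calc x ^ γ ≤ x ^ (1 : ℝ) := Real.rpow_le_rpow_of_exponent_le h hγ₁
      _ ≤ 1 + x := by rw [Real.rpow_one]; linarith

lemma Real.min_one_rpow {t γ : ℝ} (ht : 0 ≤ t) (hγ : 0 ≤ γ) :
    min 1 (t ^ γ) = min 1 (t ^ 2) ^ (γ / 2) := by
  rw [(Real.monotoneOn_rpow_Ici_of_exponent_nonneg (by positivity)).map_min (by simp)
    (by simp [sq_nonneg]), Real.one_rpow, ← Real.rpow_natCast, ← Real.rpow_mul ht]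
  norm_num [mul_div_cancel₀]

section Integral

variable {α : Type*} [MeasurableSpace α] {μ : Measure α} {g h : α → ℝ} {γ : ℝ}

lemma MeasureTheory.Integrable.rpow_of_le_one [IsFiniteMeasure μ] (hg : Integrable g μ)
    (hg₀ : 0 ≤ᵐ[μ] g) (hγ₀ : 0 ≤ γ) (hγ₁ : γ ≤ 1) : Integrable (fun x ↦ g x ^ γ) μ := by
  refine ((integrable_const 1).add hg).mono'
    (hg.aemeasurable.pow_const γ).aestronglyMeasurable ?_
  filter_upwards [hg₀] with x hx
  rw [Real.norm_of_nonneg (Real.rpow_nonneg hx γ)]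
  exact Real.rpow_le_one_add hx hγ₀ hγ₁

lemma integral_rpow_le_rpow_integral [IsProbabilityMeasure μ] (hg : Integrable g μ)
    (hg₀ : 0 ≤ᵐ[μ] g) (hγ₀ : 0 ≤ γ) (hγ₁ : γ ≤ 1) :
    ∫ x, g x ^ γ ∂μ ≤ (∫ x, g x ∂μ) ^ γ :=
  (Real.concaveOn_rpow hγ₀ hγ₁).le_map_integral
    (continuous_id.rpow_const fun _ ↦ Or.inr hγ₀).continuousOn isClosed_Ici hg₀ hg
    (hg.rpow_of_le_one hg₀ hγ₀ hγ₁)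

lemma integral_one_add_add [IsProbabilityMeasure μ] (hg : Integrable g μ) (hh : Integrable h μ) :
    ∫ x, (1 + g x + h x) ∂μ = 1 + ∫ x, g x ∂μ + ∫ x, h x ∂μ := by
  rw [integral_add (f := fun x ↦ 1 + g x) ((integrable_const 1).add hg) hh,
    integral_add (integrable_const 1) hg,
    integral_const, probReal_univ, one_smul]

lemma integral_rpow_half_mul_sqrt_le [IsProbabilityMeasure μ] (hg : Integrable g μ)
    (hg₀ : 0 ≤ᵐ[μ] g) (hh : Integrable h μ) (hh₀ : 0 ≤ᵐ[μ] h) (hγ₀ : 0 ≤ γ) (hγ₁ : γ ≤ 1) :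
    ∫ x, g x ^ (γ / 2) * √(h x) ∂μ ≤ (∫ x, g x ∂μ) ^ (γ / 2) * √(∫ x, h x ∂μ) := by
  have hg_sq : ∀ᵐ x ∂μ, (g x ^ (γ / 2)) ^ (2 : ℝ) = g x ^ γ := by
    filter_upwards [hg₀] with x hx
    rw [← Real.rpow_mul hx, div_mul_cancel₀ γ two_ne_zero]
  have hh_sq : ∀ᵐ x ∂μ, √(h x) ^ (2 : ℝ) = h x := by
    filter_upwards [hh₀] with x hx
    rw [Real.rpow_two, Real.sq_sqrt hx]
  have hg_memLp : MemLp (fun x ↦ g x ^ (γ / 2)) (ENNReal.ofReal 2) μ := by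
    rw [ENNReal.ofReal_ofNat, memLp_two_iff_integrable_sq
      (hg.aemeasurable.pow_const _).aestronglyMeasurable]
    refine (hg.rpow_of_le_one hg₀ hγ₀ hγ₁).congr ?_
    filter_upwards [hg_sq] with x hx
    rw [Real.rpow_two] at hx
    exact hx.symm
  have hh_memLp : MemLp (fun x ↦ √(h x)) (ENNReal.ofReal 2) μ := by
    rw [ENNReal.ofReal_ofNat, memLp_two_iff_integrable_sq
      hh.aemeasurable.sqrt.aestronglyMeasurable]
    refine hh.congr ?_
    filter_upwards [hh_sq] with x hx
    rw [Real.rpow_two] at hx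
    exact hx.symm
  calc ∫ x, g x ^ (γ / 2) * √(h x) ∂μ
      ≤ (∫ x, (g x ^ (γ / 2)) ^ (2 : ℝ) ∂μ) ^ (1 / (2 : ℝ)) *
          (∫ x, √(h x) ^ (2 : ℝ) ∂μ) ^ (1 / (2 : ℝ)) :=
        integral_mul_le_Lp_mul_Lq_of_nonneg Real.HolderConjugate.two_two
          (by filter_upwards [hg₀] with x hx using Real.rpow_nonneg hx _)
          (ae_of_all _ fun x ↦ Real.sqrt_nonneg _) hg_memLp hh_memLp
    _ = (∫ x, g x ^ γ ∂μ) ^ (1 / (2 : ℝ)) * √(∫ x, h x ∂μ) := by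
        rw [integral_congr_ae hg_sq, integral_congr_ae hh_sq, Real.sqrt_eq_rpow]
    _ ≤ ((∫ x, g x ∂μ) ^ γ) ^ (1 / (2 : ℝ)) * √(∫ x, h x ∂μ) := by
        gcongr
        · exact integral_nonneg_of_ae
            (by filter_upwards [hg₀] with x hx using Real.rpow_nonneg hx γ)
        · exact integral_rpow_le_rpow_integral hg hg₀ hγ₀ hγ₁
    _ = (∫ x, g x ∂μ) ^ (γ / 2) * √(∫ x, h x ∂μ) := by
        rw [← Real.rpow_mul (integral_nonneg_of_ae hg₀), mul_one_div]

end Integral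

section CClass

variable {E : Type*} [NormedAddCommGroup E] {p γ : ℝ} {f : E → ℝ}

lemma dpg_nonneg (p γ : ℝ) (u v : E) : 0 ≤ dpg p γ u v :=
  mul_nonneg (le_min zero_le_one (Real.rpow_nonneg (norm_nonneg _) γ)) (Real.sqrt_nonneg _)

lemma dpg_pos {u v : E} (huv : u ≠ v) : 0 < dpg p γ u v :=
  mul_pos (lt_min one_pos (Real.rpow_pos_of_pos (norm_pos_iff.2 (sub_ne_zero.2 huv)) γ))
    (Real.sqrt_pos.2 (by positivity))

lemma dpg_eq (hγ : 0 ≤ γ) (u v : E) :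
    dpg p γ u v = min 1 (‖u - v‖ ^ 2) ^ (γ / 2) * √(1 + ‖u‖ ^ p + ‖v‖ ^ p) := by
  rw [dpg, Real.min_one_rpow (norm_nonneg _) hγ]

lemma sSup_growth_nonneg (p : ℝ) (f : E → ℝ) :
    0 ≤ sSup (Set.range fun u : E => |f u| / (1 + ‖u‖ ^ (p / 2))) :=
  Real.sSup_nonneg (by rintro _ ⟨u, rfl⟩; positivity)

lemma sSup_increment_nonneg (p γ : ℝ) (f : E → ℝ) :
    0 ≤ sSup {a : ℝ | ∃ u v : E, u ≠ v ∧ a = |f u - f v| / dpg p γ u v} :=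
  Real.sSup_nonneg (by rintro _ ⟨u, v, -, rfl⟩; exact div_nonneg (abs_nonneg _) (dpg_nonneg ..))

lemma CNorm_nonneg (p γ : ℝ) (f : E → ℝ) : 0 ≤ CNorm p γ f :=
  add_nonneg (sSup_growth_nonneg p f) (sSup_increment_nonneg p γ f)

lemma MemC.abs_le [MeasurableSpace E] (hf : MemC p γ f) (u : E) :
    |f u| ≤ CNorm p γ f * (1 + ‖u‖ ^ (p / 2)) := by
  have hgrowth := le_csSup hf.2.1 ⟨u, rfl⟩
  rw [div_le_iff₀ (by positivity)] at hgrowth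
  exact hgrowth.trans (mul_le_mul_of_nonneg_right
    (le_add_of_nonneg_right (sSup_increment_nonneg p γ f)) (by positivity))

lemma MemC.abs_sub_le [MeasurableSpace E] (hf : MemC p γ f) (u v : E) :
    |f u - f v| ≤ CNorm p γ f * dpg p γ u v := by
  rcases eq_or_ne u v with rfl | huv
  · simpa using mul_nonneg (CNorm_nonneg p γ f) (dpg_nonneg p γ u u)
  have hincr := le_csSup hf.2.2 ⟨u, v, huv, rfl⟩
  rw [div_le_iff₀ (dpg_pos huv)] at hincr
  exact hincr.trans (mul_le_mul_of_nonneg_right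
    (le_add_of_nonneg_left (sSup_growth_nonneg p f)) (dpg_nonneg ..))

lemma MemC.integrable_comp {α : Type*} [MeasurableSpace α] [MeasurableSpace E] {μ : Measure α}
    [IsFiniteMeasure μ] (hf : MemC p γ f) {g : α → E} (hg : Measurable g)
    (hm : Integrable (fun x ↦ ‖g x‖ ^ p) μ) : Integrable (fun x ↦ f (g x)) μ := by
  have hhalf : Integrable (fun x ↦ ‖g x‖ ^ (p / 2)) μ := by
    refine (hm.rpow_of_le_one (ae_of_all _ fun x ↦ by positivity) (by norm_num : (0 : ℝ) ≤ 1 / 2)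
      (by norm_num)).congr (ae_of_all _ fun x ↦ ?_)
    dsimp only
    rw [← Real.rpow_mul (norm_nonneg _), mul_one_div]
  exact (((integrable_const 1).add hhalf).const_mul _).mono' (hf.1.comp hg).aestronglyMeasurable
    (ae_of_all _ fun x ↦ hf.abs_le (g x))

end CClass

section Coupling

variable {E : Type*} [NormedAddCommGroup E] [MeasurableSpace E] [BorelSpace E]
  [SecondCountableTopology E] {p γ : ℝ} {π : Measure (E × E)}

lemma integrable_dpg [IsFiniteMeasure π] (hm₁ : Integrable (fun z ↦ ‖z.1‖ ^ p) π)
    (hm₂ : Integrable (fun z ↦ ‖z.2‖ ^ p) π) : Integrable (fun z ↦ dpg p γ z.1 z.2) π := by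
  refine (((integrable_const 1).add hm₁).add hm₂).mono' (by unfold dpg; fun_prop)
    (ae_of_all _ fun z ↦ ?_)
  have hQ : 1 ≤ 1 + ‖z.1‖ ^ p + ‖z.2‖ ^ p := by
    linarith [Real.rpow_nonneg (norm_nonneg z.1) p, Real.rpow_nonneg (norm_nonneg z.2) p]
  rw [Real.norm_of_nonneg (dpg_nonneg ..)]
  calc dpg p γ z.1 z.2 ≤ 1 * √(1 + ‖z.1‖ ^ p + ‖z.2‖ ^ p) :=
        mul_le_mul_of_nonneg_right (min_le_left _ _) (Real.sqrt_nonneg _)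
    _ ≤ 1 + ‖z.1‖ ^ p + ‖z.2‖ ^ p := by
        rw [one_mul, Real.sqrt_le_left (by positivity)]; nlinarith

lemma integral_dpg_le [IsProbabilityMeasure π] (hγ₀ : 0 ≤ γ) (hγ₁ : γ ≤ 1)
    (hm₁ : Integrable (fun z ↦ ‖z.1‖ ^ p) π) (hm₂ : Integrable (fun z ↦ ‖z.2‖ ^ p) π) :
    ∫ z, dpg p γ z.1 z.2 ∂π ≤ √(1 + ∫ z, ‖z.1‖ ^ p ∂π + ∫ z, ‖z.2‖ ^ p ∂π) *
      (∫ z, min 1 (‖z.1 - z.2‖ ^ 2) ∂π) ^ (γ / 2) := by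
  have hP : Integrable (fun z : E × E ↦ min 1 (‖z.1 - z.2‖ ^ 2)) π :=
    Integrable.of_bound (by fun_prop) 1 (ae_of_all _ fun z ↦ by
      rw [Real.norm_of_nonneg (by positivity)]; exact min_le_left _ _)
  simp_rw [dpg_eq hγ₀]
  rw [mul_comm, ← integral_one_add_add hm₁ hm₂]
  exact integral_rpow_half_mul_sqrt_le hP (ae_of_all _ fun z ↦ by positivity)
    (((integrable_const 1).add hm₁).add hm₂) (ae_of_all _ fun z ↦ by positivity) hγ₀ hγ₁

theorem abs_integral_fst_sub_integral_snd_le [IsProbabilityMeasure π] {f : E → ℝ}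
    (hf : MemC p γ f) (hγ₀ : 0 ≤ γ) (hγ₁ : γ ≤ 1)
    (hm₁ : Integrable (fun z ↦ ‖z.1‖ ^ p) π) (hm₂ : Integrable (fun z ↦ ‖z.2‖ ^ p) π) :
    |∫ z, f z.1 ∂π - ∫ z, f z.2 ∂π| ≤
      CNorm p γ f * √(1 + ∫ z, ‖z.1‖ ^ p ∂π + ∫ z, ‖z.2‖ ^ p ∂π) *
        (∫ z, min 1 (‖z.1 - z.2‖ ^ 2) ∂π) ^ (γ / 2) := by
  have hf₁ := hf.integrable_comp measurable_fst hm₁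
  have hf₂ := hf.integrable_comp measurable_snd hm₂
  calc |∫ z, f z.1 ∂π - ∫ z, f z.2 ∂π| = |∫ z, (f z.1 - f z.2) ∂π| := by
        rw [integral_sub hf₁ hf₂]
    _ ≤ ∫ z, |f z.1 - f z.2| ∂π := by
        simpa only [Real.norm_eq_abs] using
          norm_integral_le_integral_norm (μ := π) fun z ↦ f z.1 - f z.2
    _ ≤ ∫ z, CNorm p γ f * dpg p γ z.1 z.2 ∂π :=
        integral_mono (hf₁.sub hf₂).abs ((integrable_dpg hm₁ hm₂).const_mul _)
          fun z ↦ hf.abs_sub_le z.1 z.2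
    _ = CNorm p γ f * ∫ z, dpg p γ z.1 z.2 ∂π := integral_const_mul _ _
    _ ≤ _ := by
        rw [mul_assoc]
        exact mul_le_mul_of_nonneg_left (integral_dpg_le hγ₀ hγ₁ hm₁ hm₂) (CNorm_nonneg ..)

end Coupling

theorem integral_difference_bound_of_coupling_general
    {E : Type*} [NormedAddCommGroup E]
    [MeasurableSpace E] [BorelSpace E] [SecondCountableTopology E]
    (p γ : ℝ) (hγ : γ ∈ Set.Ioc (0 : ℝ) 1)
    (ν₁ ν₂ : Measure E)
    (hm₁ : Integrable (fun u : E => ‖u‖ ^ p) ν₁)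
    (hm₂ : Integrable (fun u : E => ‖u‖ ^ p) ν₂)
    (π : Measure (E × E)) [IsProbabilityMeasure π]
    (hπ₁ : π.map Prod.fst = ν₁) (hπ₂ : π.map Prod.snd = ν₂)
    (f : E → ℝ) (hf : MemC p γ f) :
    |(∫ u, f u ∂ν₁) - ∫ u, f u ∂ν₂|
      ≤ CNorm p γ f * Real.sqrt (1 + (∫ u, ‖u‖ ^ p ∂ν₁) + ∫ u, ‖u‖ ^ p ∂ν₂) *
        (∫ z : E × E, min 1 (‖z.1 - z.2‖ ^ 2) ∂π) ^ (γ / 2) := by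
  subst hπ₁ hπ₂
  have hnorm : Measurable fun u : E ↦ ‖u‖ ^ p := measurable_norm.pow_const p
  rw [integrable_map_measure hnorm.aestronglyMeasurable measurable_fst.aemeasurable] at hm₁
  rw [integrable_map_measure hnorm.aestronglyMeasurable measurable_snd.aemeasurable] at hm₂
  simp only [integral_map measurable_fst.aemeasurable hf.1.aestronglyMeasurable,
    integral_map measurable_snd.aemeasurable hf.1.aestronglyMeasurable,
    integral_map measurable_fst.aemeasurable hnorm.aestronglyMeasurable,
    integral_map measurable_snd.aemeasurable hnorm.aestronglyMeasurable]
  exact abs_integral_fst_sub_integral_snd_le hf hγ.1.le hγ.2 hm₁ hm₂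

/-- Estimate of `|ν₁(f) − ν₂(f)|` for `f ∈ C_{p,γ}` in terms of the `p`-th
moments of `ν₁, ν₂` and an arbitrary coupling `π` of `ν₁` and `ν₂`. -/
theorem integral_difference_bound_of_coupling
    {E : Type*} [NormedAddCommGroup E] [NormedSpace ℝ E] [CompleteSpace E]
    [MeasurableSpace E] [BorelSpace E] [SecondCountableTopology E]
    (p γ : ℝ) (hp : 1 ≤ p) (hγ : γ ∈ Set.Ioc (0 : ℝ) 1)
    (ν₁ ν₂ : Measure E) [IsProbabilityMeasure ν₁] [IsProbabilityMeasure ν₂]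
    (hm₁ : Integrable (fun u : E => ‖u‖ ^ p) ν₁)
    (hm₂ : Integrable (fun u : E => ‖u‖ ^ p) ν₂)
    (π : Measure (E × E)) [IsProbabilityMeasure π]
    (hπ₁ : π.map Prod.fst = ν₁) (hπ₂ : π.map Prod.snd = ν₂)
    (f : E → ℝ) (hf : MemC p γ f) :
    |(∫ u, f u ∂ν₁) - ∫ u, f u ∂ν₂|
      ≤ CNorm p γ f * Real.sqrt (1 + (∫ u, ‖u‖ ^ p ∂ν₁) + ∫ u, ‖u‖ ^ p ∂ν₂) *
        (∫ z : E × E, min 1 (‖z.1 - z.2‖ ^ 2) ∂π) ^ (γ / 2) :=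
  integral_difference_bound_of_coupling_general p γ hγ ν₁ ν₂ hm₁ hm₂ π hπ₁ hπ₂ f hf
end
end

section
/- Let β ∈ (0,1] and let λ be a real number with 2λ > β + 1. Then for all integers n ≥ 1 and 0 ≤ m ≤ n−1, Σ_{i=m}^{n−1} (1/(i+1))^β · [((i+2)/(n+1))^{2λ} − (i/n)^{2λ}] ≤ (2+5β) · (1/n)^β. -/
/-!
Put `p = 2λ`, `q = p - β ≥ 1`, `aᵢ = (i+2)/(n+1)` and `bᵢ = i/n`, so that `bᵢ ≤ aᵢ`.
Weighted AM-GM gives `q (aᵖ - bᵖ) ≤ p a^β (a^q - b^q)`, and `(i+1)^(-β) aᵢ^β ≤ (3/(2n))^β`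
for `i ≥ 1` (for `i = 0` simply `a₀ᵖ = a₀^β a₀^q`), so every summand is at most
`(1+β) (3/2)^β n^(-β) (aᵢ^q - bᵢ^q)`. As `aᵢ ≤ min ((i+2)/n) 1`, the sum of `aᵢ^q - bᵢ^q` is
dominated by a telescoping sum of step two of values in `[0, 1]`, hence is at most `2`; finally
`2 (1+β) (3/2)^β ≤ 2 (1+β) (1+β/2) ≤ 2 + 5β` by Bernoulli's inequality.
-/

open Finset Real

lemma mul_rpow_sub_rpow_le {a b p q : ℝ} (ha : 0 ≤ a) (hb : 0 ≤ b) (hq : 0 < q) (hqp : q ≤ p) :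
    q * (a ^ p - b ^ p) ≤ p * a ^ (p - q) * (a ^ q - b ^ q) := by
  have hp : 0 < p := hq.trans_le hqp
  have young := geom_mean_le_arith_mean2_weighted (div_nonneg hq.le hp.le)
    (sub_nonneg.2 ((div_le_one hp).2 hqp)) (rpow_nonneg hb p) (rpow_nonneg ha p)
    (add_sub_cancel _ _)
  rw [← rpow_mul hb, ← rpow_mul ha, mul_div_cancel₀ _ hp.ne', mul_one_sub,
    mul_div_cancel₀ _ hp.ne'] at young
  have hsplit : a ^ p = a ^ (p - q) * a ^ q := by
    rw [← rpow_add' ha (by linarith), sub_add_cancel]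
  have := mul_le_mul_of_nonneg_left young hp.le
  rw [hsplit] at this ⊢
  field_simp at this
  linarith

lemma sum_Icc_sub_two_le {f : ℕ → ℝ} (hf₀ : ∀ j, 0 ≤ f j) (hf₁ : ∀ j, f j ≤ 1) (m N : ℕ) :
    ∑ i ∈ Icc m N, (f (i + 2) - f i) ≤ 2 := by
  rcases lt_or_ge N m with hNm | hmN
  · simp [Icc_eq_empty_of_lt hNm]
  have hstep : ∀ i, f (i + 2) - f i = (f (i + 1 + 1) - f (i + 1)) + (f (i + 1) - f i) :=
    fun i ↦ by ring
  simp only [hstep, sum_add_distrib, sum_Icc_sub hmN (fun i ↦ f (i + 1)), sum_Icc_sub hmN f]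
  linarith [hf₁ (N + 1 + 1), hf₀ (m + 1), hf₁ (N + 1), hf₀ m]

lemma rpow_two_div_add_one_le {β x : ℝ} (hβ0 : 0 ≤ β) (hβ1 : β ≤ 1) (hx : 0 < x) :
    (2 / (x + 1)) ^ β ≤ (1 + β) * ((3 / 2) ^ β * (1 / x) ^ β) := by
  have hfour_thirds : (4 / 3 : ℝ) ^ β ≤ 1 + β / 3 := by
    have := rpow_one_add_le_one_add_mul_self (s := 1 / 3) (by norm_num) hβ0 hβ1
    norm_num at this
    linarith
  calc (2 / (x + 1)) ^ β ≤ (4 / 3 * (3 / 2 * (1 / x))) ^ β := by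
        apply rpow_le_rpow (by positivity) _ hβ0
        rw [show (4 / 3 : ℝ) * (3 / 2 * (1 / x)) = 2 / x by field_simp; norm_num]
        gcongr; linarith
    _ = (4 / 3) ^ β * ((3 / 2) ^ β * (1 / x) ^ β) := by
        rw [mul_rpow (by norm_num) (by positivity), mul_rpow (by norm_num) (by positivity)]
    _ ≤ (1 + β) * ((3 / 2) ^ β * (1 / x) ^ β) := by
        gcongr; linarith

lemma one_div_add_one_rpow_mul_rpow_le {β x y : ℝ} (hβ : 0 ≤ β) (hx : 1 ≤ x) (hy : 0 < y) :
    (1 / (x + 1)) ^ β * ((x + 2) / (y + 1)) ^ β ≤ (3 / 2) ^ β * (1 / y) ^ β := by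
  rw [← mul_rpow (by positivity) (by positivity), ← mul_rpow (by norm_num) (by positivity)]
  apply rpow_le_rpow (by positivity) _ hβ
  rw [div_mul_div_comm, one_mul, div_le_iff₀ (by positivity)]
  field_simp
  nlinarith

lemma weighted_rpow_sub_rpow_le {β p : ℝ} (hβ0 : 0 ≤ β) (hβ1 : β ≤ 1) (hp : β + 1 ≤ p)
    {n i : ℕ} (hn : 0 < n) (hi : i ≤ 2 * n) :
    (1 / ((i : ℝ) + 1)) ^ β * ((((i : ℝ) + 2) / ((n : ℝ) + 1)) ^ p - ((i : ℝ) / n) ^ p)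
      ≤ (1 + β) * ((3 / 2) ^ β * (1 / (n : ℝ)) ^ β) *
        ((((i : ℝ) + 2) / ((n : ℝ) + 1)) ^ (p - β) - ((i : ℝ) / n) ^ (p - β)) := by
  have hn' : (0 : ℝ) < n := by exact_mod_cast hn
  have hq : 1 ≤ p - β := by linarith
  set a : ℝ := ((i : ℝ) + 2) / ((n : ℝ) + 1)
  have ha : 0 ≤ a := by positivity
  rcases Nat.eq_zero_or_pos i with rfl | hi₁
  · have hsplit : a ^ p = a ^ β * a ^ (p - β) := by
      rw [← rpow_add' ha (by linarith), add_sub_cancel]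
    simp only [Nat.cast_zero, zero_add, div_one, one_rpow, one_mul, zero_div,
      zero_rpow (by linarith : p ≠ 0), zero_rpow (by linarith : p - β ≠ 0), sub_zero, hsplit]
    gcongr
    simpa [a] using rpow_two_div_add_one_le hβ0 hβ1 hn'
  · set b : ℝ := (i : ℝ) / n
    have hb : 0 ≤ b := by positivity
    have hba : b ≤ a := by
      rw [div_le_div_iff₀ hn' (by positivity)]
      have : (i : ℝ) ≤ 2 * n := by exact_mod_cast hi
      linarith
    have hratio : p / (p - β) ≤ 1 + β := by
      rw [div_le_iff₀ (by linarith)]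
      nlinarith
    have hyoung := mul_rpow_sub_rpow_le ha hb (by linarith) (sub_le_self p hβ0)
    rw [sub_sub_cancel] at hyoung
    calc (1 / ((i : ℝ) + 1)) ^ β * (a ^ p - b ^ p)
        = (1 / ((i : ℝ) + 1)) ^ β * ((p - β) * (a ^ p - b ^ p)) / (p - β) := by
          field_simp
      _ ≤ (1 / ((i : ℝ) + 1)) ^ β * (p * a ^ β * (a ^ (p - β) - b ^ (p - β))) / (p - β) := by
          gcongr
      _ = p / (p - β) * ((1 / ((i : ℝ) + 1)) ^ β * a ^ β) * (a ^ (p - β) - b ^ (p - β)) := by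
          ring
      _ ≤ (1 + β) * ((3 / 2) ^ β * (1 / (n : ℝ)) ^ β) * (a ^ (p - β) - b ^ (p - β)) := by
          gcongr ?_ * ?_ * _
          · exact sub_nonneg.2 (rpow_le_rpow hb hba (by linarith))
          · exact one_div_add_one_rpow_mul_rpow_le hβ0 (by exact_mod_cast hi₁) hn'

lemma sum_rpow_sub_rpow_le_two {q : ℝ} (hq : 0 ≤ q) {n : ℕ} (hn : 0 < n) (m : ℕ) :
    ∑ i ∈ Icc m (n - 1), ((((i : ℝ) + 2) / ((n : ℝ) + 1)) ^ q - ((i : ℝ) / n) ^ q) ≤ 2 := by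
  have hn' : (0 : ℝ) < n := by exact_mod_cast hn
  calc ∑ i ∈ Icc m (n - 1), ((((i : ℝ) + 2) / ((n : ℝ) + 1)) ^ q - ((i : ℝ) / n) ^ q)
      ≤ ∑ i ∈ Icc m (n - 1), (min (((i + 2 : ℕ) : ℝ) / n) 1 ^ q - min ((i : ℝ) / n) 1 ^ q) := by
        refine sum_le_sum fun i hi ↦ ?_
        have hin : (i : ℝ) + 1 ≤ n := by
          have := (mem_Icc.1 hi).2
          exact_mod_cast (by omega : i + 1 ≤ n)
        rw [min_eq_left (a := (i : ℝ) / n) ((div_le_one hn').2 (by linarith))]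
        push_cast
        gcongr
        exact le_min (by gcongr; linarith) ((div_le_one (by linarith)).2 (by linarith))
    _ ≤ 2 := sum_Icc_sub_two_le (f := fun j : ℕ ↦ min ((j : ℝ) / n) 1 ^ q)
        (fun j ↦ by positivity) (fun j ↦ rpow_le_one (by positivity) (min_le_right _ _) hq) m _

theorem weighted_power_sum_bound_general (β lam : ℝ)
    (hβ : β ∈ Set.Ioc (0 : ℝ) 1) (hlam : β + 1 < 2 * lam)
    (n m : ℕ) (hn : 1 ≤ n) :
    ∑ i ∈ Finset.Icc m (n - 1),
        (1 / ((i : ℝ) + 1)) ^ β *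
          ((((i : ℝ) + 2) / ((n : ℝ) + 1)) ^ (2 * lam) - ((i : ℝ) / (n : ℝ)) ^ (2 * lam))
      ≤ (2 + 5 * β) * (1 / (n : ℝ)) ^ β := by
  obtain ⟨hβ0, hβ1⟩ := hβ
  set C := (1 + β) * ((3 / 2 : ℝ) ^ β * (1 / (n : ℝ)) ^ β)
  have hthree_halves : (3 / 2 : ℝ) ^ β ≤ 1 + β / 2 := by
    have := rpow_one_add_le_one_add_mul_self (s := 1 / 2) (by norm_num) hβ0.le hβ1
    norm_num at this
    linarith
  calc _ ≤ ∑ i ∈ Icc m (n - 1), C *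
          ((((i : ℝ) + 2) / ((n : ℝ) + 1)) ^ (2 * lam - β) - ((i : ℝ) / n) ^ (2 * lam - β)) :=
        sum_le_sum fun i hi ↦
          weighted_rpow_sub_rpow_le hβ0.le hβ1 hlam.le hn (by have := (mem_Icc.1 hi).2; omega)
    _ = C * ∑ i ∈ Icc m (n - 1),
          ((((i : ℝ) + 2) / ((n : ℝ) + 1)) ^ (2 * lam - β) - ((i : ℝ) / n) ^ (2 * lam - β)) :=
        (mul_sum _ _ _).symm
    _ ≤ C * 2 := by gcongr; exact sum_rpow_sub_rpow_le_two (by linarith) hn m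
    _ ≤ (2 + 5 * β) * (1 / (n : ℝ)) ^ β := by
        have hcoef : (1 + β) * (3 / 2 : ℝ) ^ β * 2 ≤ 2 + 5 * β := by
          nlinarith [rpow_nonneg (by norm_num : (0 : ℝ) ≤ 3 / 2) β]
        calc C * 2 = (1 + β) * (3 / 2 : ℝ) ^ β * 2 * (1 / (n : ℝ)) ^ β := by ring
          _ ≤ _ := by gcongr

/-- For `β ∈ (0,1]` and real `λ` with `2λ > β + 1`, for all integers `n ≥ 1`
and `0 ≤ m ≤ n−1`,
`∑_{i=m}^{n−1} (1/(i+1))^β [((i+2)/(n+1))^{2λ} − (i/n)^{2λ}] ≤ (2+5β)(1/n)^β`. -/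
theorem weighted_power_sum_bound (β lam : ℝ)
    (hβ : β ∈ Set.Ioc (0 : ℝ) 1) (hlam : β + 1 < 2 * lam)
    (n m : ℕ) (hn : 1 ≤ n) (hm : m ≤ n - 1) :
    ∑ i ∈ Finset.Icc m (n - 1),
        (1 / ((i : ℝ) + 1)) ^ β *
          ((((i : ℝ) + 2) / ((n : ℝ) + 1)) ^ (2 * lam) - ((i : ℝ) / (n : ℝ)) ^ (2 * lam))
      ≤ (2 + 5 * β) * (1 / (n : ℝ)) ^ β :=
  weighted_power_sum_bound_general β lam hβ hlam n m hn
end
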